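/- arXiv:2502.01266 — 11 statements merged into one kernel-verified Lean document; each statement's English description precedes it below -/
import Mathlib

section
/- In a skew orthomodular poset, if a ≤ b and the upper cone U(a, b') = {1}, then a = b. -/
/-!
The antitone involution turns a lower bound `z` of `{b, a'}` into an upper bound `z'` of
`{a, b'}`, so `U(a, b') = {1}` forces `L(b, a') = {0}`. The skew orthomodular law for `a ≤ b`
then reads `U(b) = U({a} ∪ {0}) = U(a)`, whence `b ≤ a`.
-/

section Orthocomplement

variable {P : Type*} [PartialOrder P] {f : P → P}

theorem compl_top_eq_bot_of_lowerBounds [BoundedOrder P]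
    (hinf : lowerBounds {(⊤ : P), f ⊤} = {⊥}) : f ⊤ = ⊥ := by
  have hmem : f ⊤ ∈ lowerBounds {(⊤ : P), f ⊤} := by
    simp only [mem_lowerBounds, Set.mem_insert_iff, Set.mem_singleton_iff, forall_eq_or_imp,
      forall_eq, le_top, le_refl, and_self]
  rwa [hinf] at hmem

theorem apply_mem_upperBounds_pair_of_mem_lowerBounds_pair
    (hinv : ∀ x, f (f x) = x) (hanti : ∀ x y : P, x ≤ y → f y ≤ f x) {a b z : P}
    (hz : z ∈ lowerBounds {b, f a}) : f z ∈ upperBounds {a, f b} := by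
  simp only [mem_lowerBounds, mem_upperBounds, Set.mem_insert_iff, Set.mem_singleton_iff,
    forall_eq_or_imp, forall_eq] at hz ⊢
  exact ⟨hinv a ▸ hanti _ _ hz.2, hanti _ _ hz.1⟩

theorem lowerBounds_pair_subset_bot [BoundedOrder P]
    (hinv : ∀ x, f (f x) = x) (hanti : ∀ x y : P, x ≤ y → f y ≤ f x) (hftop : f ⊤ = ⊥)
    {a b : P} (h : upperBounds {a, f b} = {⊤}) : lowerBounds {b, f a} ⊆ {⊥} := by
  intro z hz
  have hfz : f z ∈ ({⊤} : Set P) :=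
    h ▸ apply_mem_upperBounds_pair_of_mem_lowerBounds_pair hinv hanti hz
  rw [Set.mem_singleton_iff, ← hinv z, Set.mem_singleton_iff.mp hfz, hftop]

theorem le_of_lowerBounds_pair_subset_bot [OrderBot P]
    (hskew : ∀ x y : P, x ≤ y →
      upperBounds {y} = upperBounds (insert x (lowerBounds {y, f x})))
    {x y : P} (hxy : x ≤ y) (h : lowerBounds {y, f x} ⊆ {⊥}) : y ≤ x := by
  have hx : x ∈ upperBounds (insert x (lowerBounds {y, f x})) := by
    rw [upperBounds_insert]
    exact ⟨le_refl x, fun z hz ↦ (h hz).symm ▸ bot_le⟩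
  rw [← hskew x y hxy, upperBounds_singleton] at hx
  exact hx

end Orthocomplement

theorem skew_omp_upper_cone_one_general {P : Type*} [PartialOrder P] [BoundedOrder P]
    (f : P → P)
    (hinv : ∀ x, f (f x) = x)
    (hanti : ∀ x y : P, x ≤ y → f y ≤ f x)
    (hinf : ∀ x : P, lowerBounds {x, f x} = {(⊥ : P)})
    (hskew : ∀ x y : P, x ≤ y →
      upperBounds {y} = upperBounds (insert x (lowerBounds {y, f x})))
    (a b : P) (hab : a ≤ b)
    (h : upperBounds {a, f b} = {(⊤ : P)}) :
    a = b := by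
  have hftop : f ⊤ = ⊥ := compl_top_eq_bot_of_lowerBounds (hinf ⊤)
  exact le_antisymm hab <| le_of_lowerBounds_pair_subset_bot hskew hab <|
    lowerBounds_pair_subset_bot hinv hanti hftop h

/-- In a skew orthomodular poset, if a ≤ b and U(a, b') = {1}, then a = b. -/
theorem skew_omp_upper_cone_one {P : Type*} [PartialOrder P] [BoundedOrder P]
    (f : P → P)
    (hinv : ∀ x, f (f x) = x)
    (hanti : ∀ x y : P, x ≤ y → f y ≤ f x)
    (hinf : ∀ x : P, lowerBounds {x, f x} = {(⊥ : P)})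
    (hsup : ∀ x : P, upperBounds {x, f x} = {(⊤ : P)})
    (hskew : ∀ x y : P, x ≤ y →
      upperBounds {y} = upperBounds (insert x (lowerBounds {y, f x})))
    (a b : P) (hab : a ≤ b)
    (h : upperBounds {a, f b} = {(⊤ : P)}) :
    a = b :=
  skew_omp_upper_cone_one_general f hinv hanti hinf hskew a b hab h
end

section
/- The two conditions defining a skew orthomodular poset are equivalent: an orthoposet satisfies (x ≤ y implies U(y) = U({x} ∪ L(y, x'))) if and only if it satisfies (x ≤ y implies L(x) = L({y} ∪ U(x, y'))). -/
/-!
An antitone involution `f` of `P` is an order isomorphism `P ≃ Pᵒᵈ`, so it exchanges upper and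
lower cones: `f '' U(A) = L(f '' A)`. Applying the first condition to `f y ≤ f x` and mapping both
sides by `f` yields the second condition for `x ≤ y`. The second condition is the first one for the
dual order, which gives the converse.
-/

open Set Function

section

variable {P : Type*} [PartialOrder P] {f : P → P}

namespace Function.Involutive

theorem image_upperBounds_of_antitone (hinv : Involutive f) (hanti : Antitone f) (s : Set P) :
    f '' upperBounds s = lowerBounds (f '' s) := by
  refine hanti.image_upperBounds_subset_lowerBounds_image.antisymm
    fun a ha => ⟨f a, fun b hb => ?_, hinv a⟩
  simpa only [hinv b] using hanti (ha (mem_image_of_mem f hb))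

theorem image_lowerBounds_of_antitone (hinv : Involutive f) (hanti : Antitone f) (s : Set P) :
    f '' lowerBounds s = upperBounds (f '' s) :=
  image_upperBounds_of_antitone (P := Pᵒᵈ) hinv hanti.dual s

end Function.Involutive

-- The two defining conditions of a skew orthomodular poset, in the paper's notation
-- `U(y) = U({x} ∪ L(y, x'))` and `L(x) = L({y} ∪ U(x, y'))` for `x ≤ y`.
def UpperConeCondition (f : P → P) : Prop :=
  ∀ x y : P, x ≤ y → upperBounds {y} = upperBounds (insert x (lowerBounds {y, f x}))

def LowerConeCondition (f : P → P) : Prop :=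
  ∀ x y : P, x ≤ y → lowerBounds {x} = lowerBounds (insert y (upperBounds {x, f y}))

theorem upperConeCondition_toDual_iff :
    UpperConeCondition (P := Pᵒᵈ) f ↔ LowerConeCondition f :=
  ⟨fun h x y hxy => h y x hxy, fun h x y hxy => h y x hxy⟩

theorem lowerConeCondition_toDual_iff :
    LowerConeCondition (P := Pᵒᵈ) f ↔ UpperConeCondition f :=
  ⟨fun h x y hxy => h y x hxy, fun h x y hxy => h y x hxy⟩

theorem LowerConeCondition.of_upperConeCondition (hinv : Involutive f) (hanti : Antitone f)
    (h : UpperConeCondition f) : LowerConeCondition f := by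
  intro x y hxy
  have hcone := congrArg (f '' ·) (h (f y) (f x) (hanti hxy))
  simpa only [hinv.image_upperBounds_of_antitone hanti, hinv.image_lowerBounds_of_antitone hanti,
    image_insert_eq, image_singleton, hinv _] using hcone

theorem upperConeCondition_iff_lowerConeCondition (hinv : Involutive f) (hanti : Antitone f) :
    UpperConeCondition f ↔ LowerConeCondition f :=
  ⟨.of_upperConeCondition hinv hanti, fun h =>
    lowerConeCondition_toDual_iff.mp <|
      LowerConeCondition.of_upperConeCondition (P := Pᵒᵈ) hinv hanti.dual <|
        upperConeCondition_toDual_iff.mpr h⟩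

end

theorem skew_omp_conditions_equivalent_general {P : Type*} [PartialOrder P]
    (f : P → P)
    (hinv : ∀ x, f (f x) = x)
    (hanti : ∀ x y : P, x ≤ y → f y ≤ f x) :
    (∀ x y : P, x ≤ y →
        upperBounds {y} = upperBounds (insert x (lowerBounds {y, f x}))) ↔
    (∀ x y : P, x ≤ y →
        lowerBounds {x} = lowerBounds (insert y (upperBounds {x, f y}))) :=
  upperConeCondition_iff_lowerConeCondition hinv fun x y => hanti x y

/-- The two conditions defining a skew orthomodular poset are equivalent. -/
theorem skew_omp_conditions_equivalent {P : Type*} [PartialOrder P] [BoundedOrder P]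
    (f : P → P)
    (hinv : ∀ x, f (f x) = x)
    (hanti : ∀ x y : P, x ≤ y → f y ≤ f x)
    (hinf : ∀ x : P, lowerBounds {x, f x} = {(⊥ : P)})
    (hsup : ∀ x : P, upperBounds {x, f x} = {(⊤ : P)}) :
    (∀ x y : P, x ≤ y →
        upperBounds {y} = upperBounds (insert x (lowerBounds {y, f x}))) ↔
    (∀ x y : P, x ≤ y →
        lowerBounds {x} = lowerBounds (insert y (upperBounds {x, f y}))) :=
  skew_omp_conditions_equivalent_general f hinv hanti
end

section
/- Let P be an orthoposet in which x ∨ y exists whenever x ≤ y'. Then P is an orthomodular poset (i.e., x ≤ y implies y = x ∨ (y ∧ x')) if and only if P is a skew orthomodular poset (i.e., x ≤ y implies U(y) = U({x} ∪ L(y, x'))). -/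
/-!
Whenever the meet `m` of `y` and `x'` exists, an element is an upper bound of `{x} ∪ L(y, x')`
exactly when it is an upper bound of `{x, m}`. So for such `x ≤ y` the skew orthomodular law
`U(y) = U({x} ∪ L(y, x'))` says precisely that `y = x ∨ m`, the orthomodular law. The meet
always exists in the presence of orthogonal joins: `y ∧ x' = (y' ∨ x)'`, and `y' ⊥ x`.
-/

open Set Function

section Bounds

variable {α : Type*} [Preorder α] {s : Set α} {a m : α}

theorem isLUB_iff_upperBounds_eq_Ici : IsLUB s a ↔ upperBounds s = Ici a :=
  ⟨IsLUB.upperBounds_eq, fun h => isLUB_iff_le_iff.2 fun b => by rw [h, mem_Ici]⟩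

theorem IsGLB.upperBounds_lowerBounds_eq (hm : IsGLB s m) :
    upperBounds (lowerBounds s) = Ici m := by
  rw [hm.lowerBounds_eq, upperBounds_Iic]

theorem IsGLB.upperBounds_insert_lowerBounds_eq (hm : IsGLB s m) (x : α) :
    upperBounds (insert x (lowerBounds s)) = upperBounds {x, m} := by
  rw [upperBounds_insert, upperBounds_insert, hm.upperBounds_lowerBounds_eq, upperBounds_singleton]

end Bounds

section AntitoneInvolution

variable {α : Type*} [Preorder α] {f : α → α}

theorem Function.Involutive.le_apply_comm_of_antitone (hinv : Involutive f) (hanti : Antitone f)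
    (z w : α) : z ≤ f w ↔ w ≤ f z :=
  ⟨fun h => hinv w ▸ hanti h, fun h => hinv z ▸ hanti h⟩

theorem Function.Involutive.isGLB_pair_of_isLUB_pair (hinv : Involutive f) (hanti : Antitone f)
    {a b s : α} (h : IsLUB {a, b} s) : IsGLB {f a, f b} (f s) := by
  refine isGLB_iff_le_iff.2 fun z => ?_
  simp only [hinv.le_apply_comm_of_antitone hanti z, isLUB_le_iff h, upperBounds_insert,
    lowerBounds_insert, upperBounds_singleton, lowerBounds_singleton, mem_inter_iff, mem_Ici,
    mem_Iic]

end AntitoneInvolution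

theorem omp_iff_skew_omp_general {P : Type*} [PartialOrder P]
    (f : P → P)
    (hinv : ∀ x, f (f x) = x)
    (hanti : ∀ x y : P, x ≤ y → f y ≤ f x)
    (hexists : ∀ x y : P, x ≤ f y → ∃ s, IsLUB {x, y} s) :
    (∀ x y : P, x ≤ y → ∃ m, IsGLB {y, f x} m ∧ IsLUB {x, m} y) ↔
    (∀ x y : P, x ≤ y →
        upperBounds {y} = upperBounds (insert x (lowerBounds {y, f x}))) := by
  have omp_law_iff_skew_law {x y m : P} (hm : IsGLB {y, f x} m) :
      IsLUB {x, m} y ↔ upperBounds {y} = upperBounds (insert x (lowerBounds {y, f x})) := by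
    rw [hm.upperBounds_insert_lowerBounds_eq, upperBounds_singleton, eq_comm,
      isLUB_iff_upperBounds_eq_Ici]
  constructor
  · intro homp x y hxy
    obtain ⟨m, hm, hy⟩ := homp x y hxy
    exact (omp_law_iff_skew_law hm).1 hy
  · intro hskew x y hxy
    obtain ⟨s, hs⟩ := hexists (f y) x (hanti x y hxy)
    have hm : IsGLB {y, f x} (f s) := by
      simpa only [hinv y] using
        Involutive.isGLB_pair_of_isLUB_pair hinv (fun _ _ h => hanti _ _ h) hs
    exact ⟨f s, hm, (omp_law_iff_skew_law hm).2 (hskew x y hxy)⟩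

/-- An orthoposet where orthogonal joins exist is orthomodular
iff it is skew orthomodular. -/
theorem omp_iff_skew_omp {P : Type*} [PartialOrder P] [BoundedOrder P]
    (f : P → P)
    (hinv : ∀ x, f (f x) = x)
    (hanti : ∀ x y : P, x ≤ y → f y ≤ f x)
    (hinf : ∀ x : P, lowerBounds {x, f x} = {(⊥ : P)})
    (hsup : ∀ x : P, upperBounds {x, f x} = {(⊤ : P)})
    (hexists : ∀ x y : P, x ≤ f y → ∃ s, IsLUB {x, y} s) :
    (∀ x y : P, x ≤ y → ∃ m, IsGLB {y, f x} m ∧ IsLUB {x, m} y) ↔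
    (∀ x y : P, x ≤ y →
        upperBounds {y} = upperBounds (insert x (lowerBounds {y, f x}))) :=
  omp_iff_skew_omp_general f hinv hanti hexists
end

section
/- In a strong skew orthomodular poset, if A ⊆ P, a ∈ P, A ≤ a (every element of A is ≤ a), and L({a} ∪ A') = {0}, then a is the supremum of A. -/
lemma isLUB_of_upperBounds_singleton_eq {α : Type*} [Preorder α] {s : Set α} {a : α}
    (h : upperBounds {a} = upperBounds s) : IsLUB s a := by
  rw [upperBounds_singleton] at h
  exact ⟨h ▸ Set.self_mem_Ici, fun _ hb => (h ▸ hb : _ ∈ Set.Ici a)⟩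

lemma upperBounds_union_singleton_bot {α : Type*} [Preorder α] [OrderBot α] (s : Set α) :
    upperBounds (s ∪ {⊥}) = upperBounds s := by
  simp

theorem strong_skew_omp_sup_general {P : Type*} [PartialOrder P] [BoundedOrder P]
    (f : P → P)
    (hsskew : ∀ (A : Set P) (y : P), y ∈ upperBounds A →
      upperBounds {y} = upperBounds (A ∪ lowerBounds (insert y (f '' A))))
    (A : Set P) (a : P) (ha : a ∈ upperBounds A)
    (h : lowerBounds (insert a (f '' A)) = {(⊥ : P)}) :
    IsLUB A a := by
  apply isLUB_of_upperBounds_singleton_eq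
  rw [hsskew A a ha, h, upperBounds_union_singleton_bot]

/-- In a strong skew orthomodular poset, if A ≤ a and
L({a} ∪ A') = {0}, then a is the supremum of A. -/
theorem strong_skew_omp_sup {P : Type*} [PartialOrder P] [BoundedOrder P]
    (f : P → P)
    (hinv : ∀ x, f (f x) = x)
    (hanti : ∀ x y : P, x ≤ y → f y ≤ f x)
    (hinf : ∀ x : P, lowerBounds {x, f x} = {(⊥ : P)})
    (hsup : ∀ x : P, upperBounds {x, f x} = {(⊤ : P)})
    (hsskew : ∀ (A : Set P) (y : P), y ∈ upperBounds A →
      upperBounds {y} = upperBounds (A ∪ lowerBounds (insert y (f '' A))))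
    (A : Set P) (a : P) (ha : a ∈ upperBounds A)
    (h : lowerBounds (insert a (f '' A)) = {(⊥ : P)}) :
    IsLUB A a :=
  strong_skew_omp_sup_general f hsskew A a ha h
end

section
/- An orthoposet satisfying the ACC is a strong skew orthomodular poset if and only if U(a) = U(A ∪ L({a} ∪ A')) for every antichain A of P and every a ∈ U(A). -/
/-!
By the ACC every element of `A` lies below a maximal element of `A`, and the maximal elements of
`A` form an antichain `M`. Passing from `A` to `M` changes neither `U(A)` nor `L({y} ∪ A')`: the
first because `M` is cofinal in `A`, the second because the involution is antitone, so that
`M'` is coinitial in `A'`. Hence the antichain condition for `M` is the strong skew condition for `A`.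
-/

lemma wellFoundedGT_of_forall_not_strictMono {α : Type*} [Preorder α]
    (h : ∀ g : ℕ → α, ¬ StrictMono g) : WellFoundedGT α :=
  ⟨RelEmbedding.wellFounded_iff_isEmpty.2 ⟨fun g => h g fun _ _ hmn => g.map_rel_iff.2 hmn⟩⟩

lemma isCofinalFor_setOf_maximal_mem {α : Type*} [Preorder α] [WellFoundedGT α] (A : Set α) :
    IsCofinalFor A {x | Maximal (· ∈ A) x} := fun a ha =>
  let ⟨m, ham, hm⟩ := exists_maximal_ge_of_wellFoundedGT (· ∈ A) a ha
  ⟨m, hm, ham⟩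

lemma upperBounds_eq_of_isCofinalFor {α : Type*} [Preorder α] {M A : Set α} (hMA : M ⊆ A)
    (hAM : IsCofinalFor A M) : upperBounds M = upperBounds A :=
  (upperBounds_mono_of_isCofinalFor hAM).antisymm (upperBounds_mono_set hMA)

lemma upperBounds_union_lowerBounds_insert_image_eq {α : Type*} [Preorder α] {f : α → α}
    (hf : Antitone f) {M A : Set α} (hMA : M ⊆ A) (hAM : IsCofinalFor A M) (y : α) :
    upperBounds (M ∪ lowerBounds (insert y (f '' M))) =
      upperBounds (A ∪ lowerBounds (insert y (f '' A))) := by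
  have hcoinitial : lowerBounds (f '' M) = lowerBounds (f '' A) :=
    (lowerBounds_mono_of_isCoinitialFor (hAM.image_of_antitone hf)).antisymm
      (lowerBounds_mono_set (Set.image_mono hMA))
  rw [upperBounds_union, upperBounds_union, lowerBounds_insert, lowerBounds_insert, hcoinitial,
    upperBounds_eq_of_isCofinalFor hMA hAM]

theorem strong_skew_iff_antichain_general {P : Type*} [PartialOrder P]
    (f : P → P)
    (hanti : ∀ x y : P, x ≤ y → f y ≤ f x)
    (hacc : ∀ g : ℕ → P, ¬ StrictMono g) :
    (∀ (A : Set P) (y : P), y ∈ upperBounds A →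
        upperBounds {y} = upperBounds (A ∪ lowerBounds (insert y (f '' A)))) ↔
    (∀ A : Set P, IsAntichain (· ≤ ·) A → ∀ a ∈ upperBounds A,
        upperBounds {a} = upperBounds (A ∪ lowerBounds (insert a (f '' A)))) := by
  refine ⟨fun h A _ a ha => h A a ha, fun h A y hy => ?_⟩
  have := wellFoundedGT_of_forall_not_strictMono hacc
  have hMA : {x | Maximal (· ∈ A) x} ⊆ A := fun _ hx => hx.prop
  rw [← upperBounds_union_lowerBounds_insert_image_eq (fun x y hxy => hanti x y hxy) hMA
    (isCofinalFor_setOf_maximal_mem A) y]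
  exact h _ (setOfPred_maximal_antichain _) y (upperBounds_mono_set hMA hy)

/-- An orthoposet satisfying the ACC is strong skew orthomodular iff
U(a) = U(A ∪ L({a} ∪ A')) for every antichain A and every a ∈ U(A). -/
theorem strong_skew_iff_antichain {P : Type*} [PartialOrder P] [BoundedOrder P]
    (f : P → P)
    (hinv : ∀ x, f (f x) = x)
    (hanti : ∀ x y : P, x ≤ y → f y ≤ f x)
    (hinf : ∀ x : P, lowerBounds {x, f x} = {(⊥ : P)})
    (hsup : ∀ x : P, upperBounds {x, f x} = {(⊤ : P)})
    (hacc : ∀ g : ℕ → P, ¬ StrictMono g) :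
    (∀ (A : Set P) (y : P), y ∈ upperBounds A →
        upperBounds {y} = upperBounds (A ∪ lowerBounds (insert y (f '' A)))) ↔
    (∀ A : Set P, IsAntichain (· ≤ ·) A → ∀ a ∈ upperBounds A,
        upperBounds {a} = upperBounds (A ∪ lowerBounds (insert a (f '' A)))) :=
  strong_skew_iff_antichain_general f hanti hacc
end

section
/- Every Boolean poset is a skew orthomodular poset. -/
/-!
Let `x ≤ y` and let `u` bound `x` and every common lower bound of `y` and `x'`. Since `x ∨ x' = 1`,
distributivity with `z = y` gives `L(y) = LU(L(x, y) ∪ L(x', y))`; the element `u` is an upper bound of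
`L(x, y)` (through `x`) and of `L(x', y)`, so `y ≤ u`. The converse inclusion only needs `x ≤ y`.
-/

section Distributive

variable {P : Type*} [PartialOrder P] [OrderTop P]

theorem le_of_mem_upperBounds_lowerBounds_union {a b z u : P} (hab : upperBounds {a, b} = {⊤})
    (hdist : lowerBounds (upperBounds {a, b} ∪ {z}) =
      lowerBounds (upperBounds (lowerBounds {a, z} ∪ lowerBounds {b, z})))
    (hu : u ∈ upperBounds (lowerBounds {a, z} ∪ lowerBounds {b, z})) : z ≤ u := by
  have hz : z ∈ lowerBounds (upperBounds {a, b} ∪ {z}) := by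
    simp [hab]
  rw [hdist] at hz
  exact hz hu

end Distributive

theorem boolean_poset_is_skew_omp_general {P : Type*} [PartialOrder P] [BoundedOrder P]
    (f : P → P)
    (hsup : ∀ x : P, upperBounds {x, f x} = {(⊤ : P)})
    (hdist : ∀ x y z : P,
      lowerBounds (upperBounds {x, y} ∪ {z}) =
        lowerBounds (upperBounds (lowerBounds {x, z} ∪ lowerBounds {y, z}))) :
    ∀ x y : P, x ≤ y →
      upperBounds {y} = upperBounds (insert x (lowerBounds {y, f x})) := by
  intro x y hxy
  ext u
  simp only [upperBounds_insert, upperBounds_singleton, Set.mem_inter_iff, Set.mem_Ici]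
  constructor
  · intro hyu
    exact ⟨hxy.trans hyu, fun v hv => (hv (Set.mem_insert y _)).trans hyu⟩
  · rintro ⟨hxu, hu⟩
    refine le_of_mem_upperBounds_lowerBounds_union (hsup x) (hdist x (f x) y) ?_
    rw [upperBounds_union, Set.pair_comm (f x)]
    exact ⟨fun v hv => (hv (Set.mem_insert x _)).trans hxu, hu⟩

/-- Every Boolean poset is a skew orthomodular poset. -/
theorem boolean_poset_is_skew_omp {P : Type*} [PartialOrder P] [BoundedOrder P]
    (f : P → P)
    (hinv : ∀ x, f (f x) = x)
    (hanti : ∀ x y : P, x ≤ y → f y ≤ f x)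
    (hinf : ∀ x : P, lowerBounds {x, f x} = {(⊥ : P)})
    (hsup : ∀ x : P, upperBounds {x, f x} = {(⊤ : P)})
    (hdist : ∀ x y z : P,
      lowerBounds (upperBounds {x, y} ∪ {z}) =
        lowerBounds (upperBounds (lowerBounds {x, z} ∪ lowerBounds {y, z}))) :
    ∀ x y : P, x ≤ y →
      upperBounds {y} = upperBounds (insert x (lowerBounds {y, f x})) :=
  boolean_poset_is_skew_omp_general f hsup hdist
end

section
/- In an orthoposet, the sharp and flat operators are De Morgan dual: F(a,b) = (S(a',b'))' and S(a,b) = (F(a',b'))', where for a subset X, X' := {x' : x ∈ X}. -/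
/-!
An involutive antitone map `f` is an order isomorphism of `P` onto its order dual, so it carries
upper bounds of a set to lower bounds of its image and vice versa. Pushing `f` through the cone
operators in the definition of `S(a', b')` therefore turns it into `F(a'', b'') = F(a, b)`; the
other identity is the same statement read in the order dual, where `S` and `F` swap roles.
-/

/-- The sharp operator S(x,y) := U(L(x,y) ∪ L(x,y') ∪ L(x',y)). -/
def sharpOp {P : Type*} [PartialOrder P] (f : P → P) (x y : P) : Set P :=
  upperBounds (lowerBounds {x, y} ∪ lowerBounds {x, f y} ∪ lowerBounds {f x, y})

/-- The flat operator F(x,y) := L(U(x,y) ∪ U(x,y') ∪ U(x',y)). -/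
def flatOp {P : Type*} [PartialOrder P] (f : P → P) (x y : P) : Set P :=
  lowerBounds (upperBounds {x, y} ∪ upperBounds {x, f y} ∪ upperBounds {f x, y})

section Orthocomplement

variable {P : Type*} [PartialOrder P] {f : P → P}

def Function.Involutive.toOrderIsoDual (hinv : Function.Involutive f) (hanti : Antitone f) :
    P ≃o Pᵒᵈ where
  toEquiv := hinv.toPerm f |>.trans OrderDual.toDual
  map_rel_iff' {x y} := ⟨fun h => hinv x ▸ hinv y ▸ hanti h, fun h => hanti h⟩

theorem Function.Involutive.image_upperBounds_of_antitone_s11 (hinv : Function.Involutive f)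
    (hanti : Antitone f) (s : Set P) : f '' upperBounds s = lowerBounds (f '' s) :=
  (hinv.toOrderIsoDual hanti).upperBounds_image.symm

theorem Function.Involutive.image_lowerBounds_of_antitone_s11 (hinv : Function.Involutive f)
    (hanti : Antitone f) (s : Set P) : f '' lowerBounds s = upperBounds (f '' s) :=
  (hinv.toOrderIsoDual hanti).lowerBounds_image.symm

theorem flatOp_eq_image_sharpOp (hinv : Function.Involutive f) (hanti : Antitone f) (a b : P) :
    flatOp f a b = f '' sharpOp f (f a) (f b) := by
  simp only [sharpOp, flatOp, hinv.image_upperBounds_of_antitone_s11 hanti, Set.image_union,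
    hinv.image_lowerBounds_of_antitone_s11 hanti, Set.image_pair, hinv a, hinv b]

end Orthocomplement

theorem sharp_flat_de_morgan_general {P : Type*} [PartialOrder P]
    (f : P → P)
    (hinv : ∀ x, f (f x) = x)
    (hanti : ∀ x y : P, x ≤ y → f y ≤ f x)
    (a b : P) :
    flatOp f a b = f '' (sharpOp f (f a) (f b)) ∧
    sharpOp f a b = f '' (flatOp f (f a) (f b)) :=
  ⟨flatOp_eq_image_sharpOp hinv (fun x y => hanti x y) a b,
    flatOp_eq_image_sharpOp (P := Pᵒᵈ) hinv (fun x y h => hanti y x h) a b⟩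

/-- F(a,b) = (S(a',b'))' and S(a,b) = (F(a',b'))'. -/
theorem sharp_flat_de_morgan {P : Type*} [PartialOrder P] [BoundedOrder P]
    (f : P → P)
    (hinv : ∀ x, f (f x) = x)
    (hanti : ∀ x y : P, x ≤ y → f y ≤ f x)
    (hinf : ∀ x : P, lowerBounds {x, f x} = {(⊥ : P)})
    (hsup : ∀ x : P, upperBounds {x, f x} = {(⊤ : P)})
    (a b : P) :
    flatOp f a b = f '' (sharpOp f (f a) (f b)) ∧
    sharpOp f a b = f '' (flatOp f (f a) (f b)) :=
  sharp_flat_de_morgan_general f hinv hanti a b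
end

section
/- In an orthoposet, if a ≤ b' (a and b orthogonal) then S(a,b) = U(a,b), and if a' ≤ b (a' and b' orthogonal) then F(a,b) = L(a,b). -/
/-!
If `a ≤ b'` then also `b ≤ a'`, so `a ∈ L(a,b')` and `b ∈ L(a',b)`: every upper bound of the union
defining `S(a,b)` is an upper bound of `{a, b}`. Conversely each of the three lower-bound sets lies
below `a` or below `b`. The statement for `F` is the order dual.
-/

section Preorder

variable {P : Type*} [Preorder P]

theorem upperBounds_lowerBounds_union_eq {x y x' y' : P} (hx : x ≤ y') (hy : y ≤ x') :
    upperBounds (lowerBounds {x, y} ∪ lowerBounds {x, y'} ∪ lowerBounds {x', y}) =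
      upperBounds {x, y} := by
  refine Set.Subset.antisymm (upperBounds_mono_set ?_) ?_
  · have hx' : x ∈ lowerBounds {x, y'} := by simp [hx]
    have hy' : y ∈ lowerBounds {x', y} := by simp [hy]
    exact Set.insert_subset_iff.2 ⟨Or.inl (Or.inr hx'), Set.singleton_subset_iff.2 (Or.inr hy')⟩
  · intro u hu z hz
    have hxu : x ≤ u := hu (Set.mem_insert x _)
    have hyu : y ≤ u := hu (Set.mem_insert_of_mem x rfl)
    rcases hz with (hz | hz) | hz
    · exact (hz (Set.mem_insert x _)).trans hxu
    · exact (hz (Set.mem_insert x _)).trans hxu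
    · exact (hz (Set.mem_insert_of_mem _ rfl)).trans hyu

theorem lowerBounds_upperBounds_union_eq {x y x' y' : P} (hx : y' ≤ x) (hy : x' ≤ y) :
    lowerBounds (upperBounds {x, y} ∪ upperBounds {x, y'} ∪ upperBounds {x', y}) =
      lowerBounds {x, y} :=
  upperBounds_lowerBounds_union_eq (P := Pᵒᵈ) hx hy

theorem le_apply_of_le_apply {f : P → P} (hinv : ∀ x, f (f x) = x)
    (hanti : ∀ x y : P, x ≤ y → f y ≤ f x) {a b : P} (h : a ≤ f b) : b ≤ f a :=
  hinv b ▸ hanti _ _ h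

theorem apply_le_of_apply_le {f : P → P} (hinv : ∀ x, f (f x) = x)
    (hanti : ∀ x y : P, x ≤ y → f y ≤ f x) {a b : P} (h : f a ≤ b) : f b ≤ a :=
  hinv a ▸ hanti _ _ h

end Preorder

theorem sharp_flat_orthogonal_general {P : Type*} [PartialOrder P]
    (f : P → P)
    (hinv : ∀ x, f (f x) = x)
    (hanti : ∀ x y : P, x ≤ y → f y ≤ f x)
    (a b : P) :
    (a ≤ f b → sharpOp f a b = upperBounds {a, b}) ∧
    (f a ≤ b → flatOp f a b = lowerBounds {a, b}) :=
  ⟨fun h => upperBounds_lowerBounds_union_eq h (le_apply_of_le_apply hinv hanti h),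
    fun h => lowerBounds_upperBounds_union_eq (apply_le_of_apply_le hinv hanti h) h⟩

/-- If a ⊥ b then S(a,b) = U(a,b); if a' ≤ b then F(a,b) = L(a,b). -/
theorem sharp_flat_orthogonal {P : Type*} [PartialOrder P] [BoundedOrder P]
    (f : P → P)
    (hinv : ∀ x, f (f x) = x)
    (hanti : ∀ x y : P, x ≤ y → f y ≤ f x)
    (hinf : ∀ x : P, lowerBounds {x, f x} = {(⊥ : P)})
    (hsup : ∀ x : P, upperBounds {x, f x} = {(⊤ : P)})
    (a b : P) :
    (a ≤ f b → sharpOp f a b = upperBounds {a, b}) ∧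
    (f a ≤ b → flatOp f a b = lowerBounds {a, b}) :=
  sharp_flat_orthogonal_general f hinv hanti a b
end

section
/- In an orthoposet, if a C b and b C a then S(a,b) = U(a,b), where a C b means U(a) = U(L(a,b) ∪ L(a,b')). -/
/-- The compatibility relation: a C b iff U(a) = U(L(a,b) ∪ L(a,b')). -/
def compatRel {P : Type*} [PartialOrder P] (f : P → P) (a b : P) : Prop :=
  upperBounds {a} = upperBounds (lowerBounds {a, b} ∪ lowerBounds {a, f b})

open Set

section

variable {P : Type*} [PartialOrder P] (f : P → P)

theorem sharpOp_eq_inter (x y : P) :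
    sharpOp f x y = upperBounds (lowerBounds {x, y}) ∩ upperBounds (lowerBounds {x, f y}) ∩
      upperBounds (lowerBounds {f x, y}) := by
  simp only [sharpOp, upperBounds_union]

theorem upperBounds_singleton_eq_inter_of_compatRel {a b : P} (h : compatRel f a b) :
    upperBounds {a} = upperBounds (lowerBounds {a, b}) ∩ upperBounds (lowerBounds {a, f b}) := by
  rw [h, upperBounds_union]

end

theorem sharp_of_compatible_general {P : Type*} [PartialOrder P]
    (f : P → P)
    (a b : P) (hab : compatRel f a b) (hba : compatRel f b a) :
    sharpOp f a b = upperBounds {a, b} := by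
  calc sharpOp f a b
      = (upperBounds (lowerBounds {a, b}) ∩ upperBounds (lowerBounds {a, f b})) ∩
          (upperBounds (lowerBounds {b, a}) ∩ upperBounds (lowerBounds {b, f a})) := by
        rw [sharpOp_eq_inter, pair_comm b a, pair_comm b (f a), ← inter_inter_distrib_left,
          inter_assoc]
    _ = upperBounds {a} ∩ upperBounds {b} := by
        rw [upperBounds_singleton_eq_inter_of_compatRel f hab,
          upperBounds_singleton_eq_inter_of_compatRel f hba]
    _ = upperBounds {a, b} := by
        rw [← upperBounds_union, singleton_union]

/-- If a C b and b C a then S(a,b) = U(a,b). -/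
theorem sharp_of_compatible {P : Type*} [PartialOrder P] [BoundedOrder P]
    (f : P → P)
    (hinv : ∀ x, f (f x) = x)
    (hanti : ∀ x y : P, x ≤ y → f y ≤ f x)
    (hinf : ∀ x : P, lowerBounds {x, f x} = {(⊥ : P)})
    (hsup : ∀ x : P, upperBounds {x, f x} = {(⊤ : P)})
    (a b : P) (hab : compatRel f a b) (hba : compatRel f b a) :
    sharpOp f a b = upperBounds {a, b} :=
  sharp_of_compatible_general f a b hab hba
end

section
/- In an orthoposet, if a C b and a' C b' then the commutator c(a,b) = U(∅) = {1} (i.e., c(a,b) equals the whole-set condition value 1). -/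
/-! Grouping the four lower cones of `c(a,b)` by their first entry, `a C b` and `a' C b'` turn
`c(a,b)` into `U(a) ∩ U(a') = U(a, a')`, which is `{1}` because `a'` is a complement of `a`. -/

/-- The commutator c(a,b) := U(L(a,b) ∪ L(a,b') ∪ L(a',b) ∪ L(a',b')). -/
def commOp {P : Type*} [PartialOrder P] (f : P → P) (a b : P) : Set P :=
  upperBounds (lowerBounds {a, b} ∪ lowerBounds {a, f b} ∪ lowerBounds {f a, b} ∪
    lowerBounds {f a, f b})

section

variable {P : Type*} [PartialOrder P] {f : P → P}

theorem commOp_eq_upperBounds_inter (a b : P) :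
    commOp f a b = upperBounds (lowerBounds {a, b} ∪ lowerBounds {a, f b}) ∩
      upperBounds (lowerBounds {f a, b} ∪ lowerBounds {f a, f b}) := by
  rw [commOp, Set.union_assoc, upperBounds_union]

theorem compatRel_apply_right_iff (hf : Function.Involutive f) {a b : P} :
    compatRel f a (f b) ↔ compatRel f a b := by
  rw [compatRel, compatRel, hf b, Set.union_comm]

theorem commOp_eq_upperBounds_pair (hf : Function.Involutive f) {a b : P}
    (h₁ : compatRel f a b) (h₂ : compatRel f (f a) (f b)) :
    commOp f a b = upperBounds {a, f a} := by
  rw [compatRel_apply_right_iff hf] at h₂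
  rw [commOp_eq_upperBounds_inter, ← h₁, ← h₂, ← upperBounds_union, Set.singleton_union]

end

theorem commutator_of_compatible_general {P : Type*} [PartialOrder P] [BoundedOrder P]
    (f : P → P)
    (hinv : ∀ x, f (f x) = x)
    (hsup : ∀ x : P, upperBounds {x, f x} = {(⊤ : P)})
    (a b : P) (h1 : compatRel f a b) (h2 : compatRel f (f a) (f b)) :
    commOp f a b = {(⊤ : P)} := by
  rw [commOp_eq_upperBounds_pair hinv h1 h2, hsup a]

/-- If a C b and a' C b' then c(a,b) = {1}. -/
theorem commutator_of_compatible {P : Type*} [PartialOrder P] [BoundedOrder P]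
    (f : P → P)
    (hinv : ∀ x, f (f x) = x)
    (hanti : ∀ x y : P, x ≤ y → f y ≤ f x)
    (hinf : ∀ x : P, lowerBounds {x, f x} = {(⊥ : P)})
    (hsup : ∀ x : P, upperBounds {x, f x} = {(⊤ : P)})
    (a b : P) (h1 : compatRel f a b) (h2 : compatRel f (f a) (f b)) :
    commOp f a b = {(⊤ : P)} :=
  commutator_of_compatible_general f hinv hsup a b h1 h2
end

section
/- Every orthoposet in which the compatibility relation C is symmetric is a skew orthomodular poset. -/
open Set

section

variable {P : Type*} [PartialOrder P]

lemma lowerBounds_pair_of_le {a b : P} (h : a ≤ b) : lowerBounds {a, b} = Iic a := by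
  rw [lowerBounds_insert, lowerBounds_singleton]
  exact inter_eq_left.mpr (Iic_subset_Iic.mpr h)

lemma lowerBounds_pair_subset_Iic (a b : P) : lowerBounds {a, b} ⊆ Iic a := by
  rw [lowerBounds_insert]
  exact inter_subset_left

lemma compatRel_of_le (f : P → P) {a b : P} (h : a ≤ b) : compatRel f a b := by
  rw [compatRel, lowerBounds_pair_of_le h,
    union_eq_self_of_subset_right (lowerBounds_pair_subset_Iic a (f b)),
    upperBounds_Iic, upperBounds_singleton]

end

theorem symmetric_compat_implies_skew_general {P : Type*} [PartialOrder P]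
    (f : P → P)
    (hsymm : ∀ a b : P, compatRel f a b → compatRel f b a) :
    ∀ x y : P, x ≤ y →
      upperBounds {y} = upperBounds (insert x (lowerBounds {y, f x})) := by
  intro x y hxy
  have hyx : compatRel f y x := hsymm x y (compatRel_of_le f hxy)
  rw [hyx, pair_comm, lowerBounds_pair_of_le hxy, upperBounds_union, upperBounds_Iic,
    upperBounds_insert]

/-- Every orthoposet with symmetric compatibility relation is
skew orthomodular. -/
theorem symmetric_compat_implies_skew {P : Type*} [PartialOrder P] [BoundedOrder P]
    (f : P → P)
    (hinv : ∀ x, f (f x) = x)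
    (hanti : ∀ x y : P, x ≤ y → f y ≤ f x)
    (hinf : ∀ x : P, lowerBounds {x, f x} = {(⊥ : P)})
    (hsup : ∀ x : P, upperBounds {x, f x} = {(⊤ : P)})
    (hsymm : ∀ a b : P, compatRel f a b → compatRel f b a) :
    ∀ x y : P, x ≤ y →
      upperBounds {y} = upperBounds (insert x (lowerBounds {y, f x})) :=
  symmetric_compat_implies_skew_general f hsymm
end
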